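/- Let n ≥ 1 and let D_n be the diamond-path graph: its vertex set is {N, S, E, W} × {1,...,n}, and its edges are N_iE_i, N_iW_i, S_iE_i, S_iW_i for each i ∈ {1,...,n}, together with E_iW_{i+1} for each i ∈ {1,...,n-1}. For a binary string b = b_1 ... b_n, let T_b be the edge set consisting of: W_iS_i and E_iS_i for all i ∈ {1,...,n}, E_iW_{i+1} for all i ∈ {1,...,n-1}, plus the edge W_iN_i for each i with b_i = 0 and the edge E_iN_i for each i with b_i = 1. Then: (i) for every binary string b of length n, T_b is the edge set of a spanning tree of D_n; and (ii) for all binary strings b, b' of length n, the symmetric difference T_b Δ T_{b'} has cardinality 2 · d, where d is the Hamming distance between b and b'; in particular, T_b and T_{b'} differ in an edge exchange (exactly two edges) if and only if d = 1. -/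

import Mathlib

/-- The four corner labels of a diamond. -/
inductive Dir : Type
  | N | S | E | W
deriving DecidableEq

/-- The edge set of the diamond-path graph `D_n`: for each `i`, the four diamond edges
`N_iE_i, N_iW_i, S_iE_i, S_iW_i`, together with the connecting edges `E_iW_{i+1}`. -/
def diamondEdges (n : ℕ) : Set (Sym2 (Dir × Fin n)) :=
  {e | (∃ i : Fin n,
        e = s((Dir.N, i), (Dir.E, i)) ∨ e = s((Dir.N, i), (Dir.W, i)) ∨
        e = s((Dir.S, i), (Dir.E, i)) ∨ e = s((Dir.S, i), (Dir.W, i))) ∨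
       (∃ (i : Fin n) (h : (i : ℕ) + 1 < n),
        e = s((Dir.E, i), (Dir.W, ⟨(i : ℕ) + 1, h⟩)))}

/-- The diamond-path graph `D_n` on the vertex set `{N,S,E,W} × {1,...,n}`. -/
def diamondGraph (n : ℕ) : SimpleGraph (Dir × Fin n) :=
  SimpleGraph.fromEdgeSet (diamondEdges n)

/-- The edge set `T_b`: the edges `W_iS_i` and `E_iS_i` for all `i`, the edges `E_iW_{i+1}`
for all `i < n`, plus `W_iN_i` for each `i` with `b_i = 0` and `E_iN_i` for each `i` with
`b_i = 1`. -/
def treeEdges {n : ℕ} (b : Fin n → Bool) : Set (Sym2 (Dir × Fin n)) :=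
  {e | ∃ i : Fin n,
      e = s((Dir.W, i), (Dir.S, i)) ∨ e = s((Dir.E, i), (Dir.S, i)) ∨
      (∃ h : (i : ℕ) + 1 < n, e = s((Dir.E, i), (Dir.W, ⟨(i : ℕ) + 1, h⟩))) ∨
      (b i = false ∧ e = s((Dir.W, i), (Dir.N, i))) ∨
      (b i = true ∧ e = s((Dir.E, i), (Dir.N, i)))}

/-!
Every vertex other than `W_1` has a parent strictly before it in the order
`W_1 < S_1 < E_1 < N_1 < W_2 < ⋯`: `S_i ↦ W_i`, `E_i ↦ S_i`, `W_{i+1} ↦ E_i`, and `N_i ↦ W_i`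
or `E_i` according to `b_i`. The edges of `T_b` are exactly the edges from a vertex to its
parent, and such a graph on a finite vertex set is connected with one edge fewer than vertices,
hence a tree. The strings only affect the north edges, so `T_b Δ T_{b'}` consists of the two
north edges `W_iN_i`, `E_iN_i` of every index `i` with `b_i ≠ b'_i`.
-/

namespace SimpleGraph

variable {V : Type*}

theorem edgeSet_fromEdgeSet_image_parent {s : Set V} {parent : V → V}
    (h : ∀ v ∈ s, parent v ≠ v) :
    (fromEdgeSet ((fun v => s(v, parent v)) '' s)).edgeSet = (fun v => s(v, parent v)) '' s := by
  rw [edgeSet_fromEdgeSet, sdiff_eq_self_iff_disjoint, Set.disjoint_right]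
  rintro _ ⟨v, hv, rfl⟩ hdiag
  exact h v hv (Sym2.mk_isDiag_iff.mp hdiag).symm

theorem isTree_fromEdgeSet_image_parent [Finite V] (r : V) {parent : V → V} (rank : V → ℕ)
    (h : ∀ v ≠ r, rank (parent v) < rank v) :
    (fromEdgeSet ((fun v => s(v, parent v)) '' {r}ᶜ)).IsTree := by
  set G := fromEdgeSet ((fun v => s(v, parent v)) '' {r}ᶜ)
  have hne : ∀ v ∈ ({r}ᶜ : Set V), parent v ≠ v := fun v hv hpv =>
    (h v hv).ne (congrArg rank hpv)
  have hreach : ∀ v, G.Reachable v r := by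
    intro v
    induction v using (measure rank).wf.induction with
    | _ v ih =>
      by_cases hv : v = r
      · exact hv ▸ Reachable.refl _
      have hadj : G.Adj v (parent v) :=
        (fromEdgeSet_adj _).mpr ⟨⟨v, hv, rfl⟩, (hne v hv).symm⟩
      exact hadj.reachable.trans (ih _ (h v hv))
  have hinj : Set.InjOn (fun v => s(v, parent v)) {r}ᶜ := by
    intro v hv w hw hvw
    rcases Sym2.eq_iff.mp hvw with ⟨hvw, -⟩ | ⟨hvw, hwv⟩
    · exact hvw
    · have hv' := h v hv
      have hw' := h w hw
      rw [hwv] at hv'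
      rw [← hvw] at hw'
      omega
  rw [isTree_iff_connected_and_card]
  refine ⟨(connected_iff_exists_forall_reachable G).mpr ⟨r, fun v => (hreach v).symm⟩, ?_⟩
  rw [Nat.card_coe_set_eq, edgeSet_fromEdgeSet_image_parent hne, hinj.ncard_image,
    Set.compl_eq_univ_sdiff, Set.ncard_sdiff_singleton_add_one (Set.mem_univ r), Set.ncard_univ]

end SimpleGraph

open scoped symmDiff in
theorem ncard_symmDiff_graph_eq_two_mul_hammingDist {ι : Type*} [Fintype ι] (b b' : ι → Bool) :
    ({p : ι × Bool | b p.1 = p.2} ∆ {p | b' p.1 = p.2}).ncard = 2 * hammingDist b b' := by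
  have : {p : ι × Bool | b p.1 = p.2} ∆ {p | b' p.1 = p.2} = {i | b i ≠ b' i} ×ˢ Set.univ := by
    ext ⟨i, c⟩
    simp only [Set.mem_symmDiff, Set.mem_ofPred_eq, Set.mem_prod, Set.mem_univ, and_true]
    cases c <;> cases b i <;> cases b' i <;> simp
  classical
  rw [this, Set.ncard_prod, Set.ncard_univ, Nat.card_eq_fintype_card, Fintype.card_bool, mul_comm,
    hammingDist, ← Set.ncard_coe_finset]
  simp

namespace DiamondPath

instance : Fintype Dir :=
  ⟨{Dir.N, Dir.S, Dir.E, Dir.W}, fun d => by cases d <;> decide⟩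

variable {n : ℕ}

def root (hn : 0 < n) : Dir × Fin n := (Dir.W, ⟨0, hn⟩)

def rank : Dir × Fin n → ℕ
  | (Dir.W, i) => 4 * i
  | (Dir.S, i) => 4 * i + 1
  | (Dir.E, i) => 4 * i + 2
  | (Dir.N, i) => 4 * i + 3

-- At the root `(W, 0)` the truncated `0 - 1 = 0` gives a junk parent, which is never used.
def parent (b : Fin n → Bool) : Dir × Fin n → Dir × Fin n
  | (Dir.W, i) => (Dir.E, ⟨i - 1, by omega⟩)
  | (Dir.S, i) => (Dir.W, i)
  | (Dir.E, i) => (Dir.S, i)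
  | (Dir.N, i) => (cond (b i) Dir.E Dir.W, i)

theorem rank_parent_lt (hn : 0 < n) (b : Fin n → Bool) {v : Dir × Fin n} (hv : v ≠ root hn) :
    rank (parent b v) < rank v := by
  obtain ⟨_ | _ | _ | _, i⟩ := v
  · cases hb : b i <;> simp [rank, parent, hb]
  · simp [rank, parent]
  · simp [rank, parent]
  · have : (i : ℕ) ≠ 0 := fun h => hv (by simp [root, Fin.ext_iff, h])
    simp only [rank, parent]
    omega

theorem treeEdges_eq_image_parent (hn : 0 < n) (b : Fin n → Bool) :
    treeEdges b = (fun v => s(v, parent b v)) '' {root hn}ᶜ := by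
  ext e
  constructor
  · rintro ⟨i, rfl | rfl | ⟨hi, rfl⟩ | ⟨hb, rfl⟩ | ⟨hb, rfl⟩⟩
    · exact ⟨(Dir.S, i), by simp [root], by simp [parent, Sym2.eq_swap]⟩
    · exact ⟨(Dir.E, i), by simp [root], by simp [parent]⟩
    · exact ⟨(Dir.W, ⟨i + 1, hi⟩), by simp [root], by simp [parent, Sym2.eq_swap]⟩
    · exact ⟨(Dir.N, i), by simp [root], by simp [parent, hb, Sym2.eq_swap]⟩
    · exact ⟨(Dir.N, i), by simp [root], by simp [parent, hb, Sym2.eq_swap]⟩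
  · rintro ⟨⟨_ | _ | _ | _, i⟩, hv, rfl⟩
    · cases hb : b i
      · exact ⟨i, by simp [parent, hb, Sym2.eq_swap]⟩
      · exact ⟨i, by simp [parent, hb, Sym2.eq_swap]⟩
    · exact ⟨i, by simp [parent, Sym2.eq_swap]⟩
    · exact ⟨i, by simp [parent]⟩
    · obtain ⟨j, hj⟩ : ∃ j : ℕ, (i : ℕ) = j + 1 :=
        Nat.exists_eq_add_one.mpr (Nat.pos_of_ne_zero fun h => hv (by simp [root, Fin.ext_iff, h]))
      refine ⟨⟨j, by omega⟩, Or.inr (Or.inr (Or.inl ⟨show j + 1 < n by omega, ?_⟩))⟩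
      simp [parent, hj, Fin.ext_iff]

theorem treeEdges_subset_diamondEdges (b : Fin n → Bool) : treeEdges b ⊆ diamondEdges n := by
  rintro e ⟨i, rfl | rfl | ⟨hi, rfl⟩ | ⟨-, rfl⟩ | ⟨-, rfl⟩⟩
  · exact Or.inl ⟨i, Or.inr (Or.inr (Or.inr Sym2.eq_swap))⟩
  · exact Or.inl ⟨i, Or.inr (Or.inr (Or.inl Sym2.eq_swap))⟩
  · exact Or.inr ⟨i, hi, rfl⟩
  · exact Or.inl ⟨i, Or.inr (Or.inl Sym2.eq_swap)⟩
  · exact Or.inl ⟨i, Or.inl Sym2.eq_swap⟩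

def spineEdges (n : ℕ) : Set (Sym2 (Dir × Fin n)) :=
  {e | ∃ i : Fin n,
      e = s((Dir.W, i), (Dir.S, i)) ∨ e = s((Dir.E, i), (Dir.S, i)) ∨
      (∃ h : (i : ℕ) + 1 < n, e = s((Dir.E, i), (Dir.W, ⟨(i : ℕ) + 1, h⟩)))}

def northEdge (p : Fin n × Bool) : Sym2 (Dir × Fin n) :=
  s((cond p.2 Dir.E Dir.W, p.1), (Dir.N, p.1))

theorem northEdge_injective : Function.Injective (northEdge (n := n)) := by
  rintro ⟨i, _ | _⟩ ⟨j, _ | _⟩ h <;> simp_all [northEdge]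

theorem treeEdges_eq_union (b : Fin n → Bool) :
    treeEdges b = spineEdges n ∪ northEdge '' {p | b p.1 = p.2} := by
  ext e
  constructor
  · rintro ⟨i, h | h | h | ⟨hb, rfl⟩ | ⟨hb, rfl⟩⟩
    · exact Or.inl ⟨i, Or.inl h⟩
    · exact Or.inl ⟨i, Or.inr (Or.inl h)⟩
    · exact Or.inl ⟨i, Or.inr (Or.inr h)⟩
    · exact Or.inr ⟨(i, false), hb, rfl⟩
    · exact Or.inr ⟨(i, true), hb, rfl⟩
  · rintro (⟨i, h | h | h⟩ | ⟨⟨i, _ | _⟩, hb, rfl⟩)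
    · exact ⟨i, Or.inl h⟩
    · exact ⟨i, Or.inr (Or.inl h)⟩
    · exact ⟨i, Or.inr (Or.inr (Or.inl h))⟩
    · exact ⟨i, Or.inr (Or.inr (Or.inr (Or.inl ⟨hb, rfl⟩)))⟩
    · exact ⟨i, Or.inr (Or.inr (Or.inr (Or.inr ⟨hb, rfl⟩)))⟩

theorem disjoint_spineEdges_image_northEdge (s : Set (Fin n × Bool)) :
    Disjoint (spineEdges n) (northEdge '' s) := by
  rw [Set.disjoint_right]
  rintro _ ⟨⟨j, _ | _⟩, -, rfl⟩ ⟨i, h | h | ⟨_, h⟩⟩ <;> simp [northEdge] at h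

open scoped symmDiff in
theorem ncard_symmDiff_treeEdges (b b' : Fin n → Bool) :
    (treeEdges b ∆ treeEdges b').ncard = 2 * hammingDist b b' := by
  have hT (b : Fin n → Bool) : treeEdges b = spineEdges n ∆ (northEdge '' {p | b p.1 = p.2}) :=
    (treeEdges_eq_union b).trans (disjoint_spineEdges_image_northEdge _).symmDiff_eq_sup.symm
  rw [hT, hT, symmDiff_symmDiff_symmDiff_comm, symmDiff_self, bot_symmDiff,
    ← Set.image_symmDiff northEdge_injective, Set.ncard_image_of_injective _ northEdge_injective,
    ncard_symmDiff_graph_eq_two_mul_hammingDist]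

end DiamondPath

open DiamondPath SimpleGraph in
/-- (i) for every binary string `b` of length `n`, `T_b` is the edge set of a
spanning tree of the diamond-path graph `D_n`; (ii) for all `b, b'`, the symmetric
difference `T_b Δ T_{b'}` has cardinality `2 · d` where `d` is the Hamming distance of
`b` and `b'`; in particular `T_b` and `T_{b'}` differ in an edge exchange (exactly two
edges) iff `d = 1`. -/
theorem treeEdges_spanning_tree_and_exchange (n : ℕ) (hn : 1 ≤ n) :
    (∀ b : Fin n → Bool,
      (SimpleGraph.fromEdgeSet (treeEdges b)).edgeSet = treeEdges b ∧
      SimpleGraph.fromEdgeSet (treeEdges b) ≤ diamondGraph n ∧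
      (SimpleGraph.fromEdgeSet (treeEdges b)).IsTree) ∧
    (∀ b b' : Fin n → Bool,
      (symmDiff (treeEdges b) (treeEdges b')).ncard = 2 * hammingDist b b' ∧
      ((symmDiff (treeEdges b) (treeEdges b')).ncard = 2 ↔ hammingDist b b' = 1)) := by
  refine ⟨fun b => ?_, fun b b' => ?_⟩
  · have hT := treeEdges_eq_image_parent hn b
    have hlt : ∀ v ≠ root hn, rank (parent b v) < rank v := fun _ => rank_parent_lt hn b
    refine ⟨?_, fromEdgeSet_mono (treeEdges_subset_diamondEdges b), ?_⟩
    · rw [hT]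
      exact edgeSet_fromEdgeSet_image_parent fun v hv => ne_of_apply_ne rank (hlt v hv).ne
    · rw [hT]
      exact isTree_fromEdgeSet_image_parent (root hn) rank hlt
  · rw [ncard_symmDiff_treeEdges]
    omega
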